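/- arXiv:2405.18947 — 2 statements merged into one kernel-verified Lean document; each statement's English description precedes it below -/
import Mathlib

section
/- Let A generate a positive C₀-semigroup with negative growth bound on a Banach lattice X, and let B : U → X_{−1} and C : X → U be positive with U an AM-space and C bounded. If r(C A_{−1}^{−1} B) < 1 then for every λ > 0 one has 0 ≤ C R(λ, A_{−1}) B ≤ −C A_{−1}^{−1} B and hence r(C R(λ, A_{−1}) B) ≤ r(C A_{−1}^{−1} B) < 1; in particular 1 ∈ ρ(C R(λ, A_{−1}) B) for all λ > 0. -/
open Filter Topology Set MeasureTheory

/-- A strongly continuous one-parameter semigroup of bounded operators. -/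
structure C0Semigroup (X : Type*) [NormedAddCommGroup X] [NormedSpace ℝ X] where
  toFun : ℝ → X →L[ℝ] X
  map_zero' : toFun 0 = ContinuousLinearMap.id ℝ X
  map_add' : ∀ s t : ℝ, 0 ≤ s → 0 ≤ t → toFun (s + t) = (toFun s).comp (toFun t)
  strongCont' : ∀ x : X, ContinuousOn (fun t => toFun t x) (Set.Ici 0)

/-- `A` (an unbounded operator given as a partial linear map) is the generator
of the `C₀`-semigroup `T`. -/
def C0Semigroup.IsGenerator {X : Type*} [NormedAddCommGroup X] [NormedSpace ℝ X]
    (T : C0Semigroup X) (A : X →ₗ.[ℝ] X) : Prop :=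
  (∀ x : X, x ∈ A.domain ↔
      ∃ y : X, Tendsto (fun t : ℝ => t⁻¹ • (T.toFun t x - x)) (𝓝[>] 0) (𝓝 y)) ∧
  (∀ x : A.domain,
      Tendsto (fun t : ℝ => t⁻¹ • (T.toFun t (x : X) - (x : X))) (𝓝[>] 0) (𝓝 (A x)))

/-- `R` is the resolvent `R(l, A)` of the partial linear operator `A`. -/
def IsResolventAt {X : Type*} [NormedAddCommGroup X] [NormedSpace ℝ X]
    (A : X →ₗ.[ℝ] X) (l : ℝ) (R : X →L[ℝ] X) : Prop :=
  (∀ x : X, ∃ h : R x ∈ A.domain, l • R x - A ⟨R x, h⟩ = x) ∧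
  (∀ x : A.domain, R (l • (x : X) - A x) = x)

/-- The semigroup has negative growth bound. -/
def C0Semigroup.NegGrowthBound {X : Type*} [NormedAddCommGroup X] [NormedSpace ℝ X]
    (T : C0Semigroup X) : Prop :=
  ∃ ε > (0:ℝ), ∃ M : ℝ, ∀ t : ℝ, 0 ≤ t → ‖T.toFun t‖ ≤ M * Real.exp (-ε * t)

/-- `U` is an AM-space. -/
def IsAMSpace (U : Type*) [NormedAddCommGroup U] [Lattice U] [HasSolidNorm U] [IsOrderedAddMonoid U] : Prop :=
  ∀ x y : U, 0 ≤ x → 0 ≤ y → ‖x ⊔ y‖ = max ‖x‖ ‖y‖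


/-!
Positivity of the semigroup makes every resolvent `R(m, A₋₁)`, `m ≥ 0`, positive on the closure
of the positive cone of `X`, being the Laplace transform `∫₀^∞ e^{-mt} T(t) dt` there. Hence
`Q l = C R(l, A₋₁) B` is a positive operator on `U`, and the resolvent identity
`R(0) - R(l) = l R(l) R(0)` gives `Q l ≤ Q 0`. For positive operators the real spectral radius
is monotone: the resolvent `R(μ, T)` of a positive `T` stays positive for all `μ > r(T)`
(continuous induction down from `μ > ‖T‖` by Neumann series), so `‖Tⁿ‖ ≤ ‖R(μ, T)‖ μⁿ⁺¹`, while
`0 ≤ S ≤ T` gives `‖Sⁿ‖ ≤ ‖Tⁿ‖` because the norm of `U` is solid.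
-/

theorem nonneg_of_two_pow_nsmul_nonneg {G : Type*} [AddCommGroup G] [Lattice G]
    [IsOrderedAddMonoid G] {y : G} : ∀ k : ℕ, 0 ≤ 2 ^ k • y → 0 ≤ y
  | 0, h => by simpa using h
  | k + 1, h => nonneg_of_two_pow_nsmul_nonneg k <| nsmul_two_semiclosed <| by
      rwa [← mul_nsmul, ← pow_succ]

section NormedLattice

variable {E : Type*} [NormedAddCommGroup E] [Lattice E] [HasSolidNorm E] [IsOrderedAddMonoid E]
  [NormedSpace ℝ E]

-- The order is not assumed compatible with the scalar action: `c • x` is approximated by the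
-- dyadic multiples `⌊c 2ᵏ⌋ • (2⁻ᵏ • x)`, which are nonnegative because `E` is a lattice group.
theorem HasSolidNorm.smul_nonneg {c : ℝ} (hc : 0 ≤ c) {x : E} (hx : 0 ≤ x) : 0 ≤ c • x := by
  have hdyadic (k : ℕ) : 0 ≤ ((⌊c * 2 ^ k⌋₊ : ℝ) / 2 ^ k) • x := by
    have hinv : 0 ≤ ((2 : ℝ) ^ k)⁻¹ • x := nonneg_of_two_pow_nsmul_nonneg k <| by
      rw [← Nat.cast_smul_eq_nsmul ℝ, Nat.cast_pow, Nat.cast_ofNat, smul_inv_smul₀ (by positivity)]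
      exact hx
    rw [div_eq_mul_inv, mul_smul, Nat.cast_smul_eq_nsmul]
    exact nsmul_nonneg hinv _
  have hlim : Tendsto (fun k : ℕ => (⌊c * 2 ^ k⌋₊ : ℝ) / 2 ^ k) atTop (𝓝 c) :=
    (tendsto_nat_floor_mul_div_atTop hc).comp
      (tendsto_pow_atTop_atTop_of_one_lt (by norm_num : (1 : ℝ) < 2))
  exact isClosed_nonneg.mem_of_tendsto (hlim.smul_const x) (Eventually.of_forall hdyadic)

instance HasSolidNorm.isOrderedModule : IsOrderedModule ℝ E :=
  .of_smul_nonneg fun _ hc _ hx => HasSolidNorm.smul_nonneg hc hx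

end NormedLattice

section PositiveOperator

variable {U : Type*} [NormedAddCommGroup U] [NormedSpace ℝ U]

def IsPositiveOperator [Preorder U] (S : U →L[ℝ] U) : Prop := ∀ u, 0 ≤ u → 0 ≤ S u

theorem isClosed_setOf_isPositiveOperator [Preorder U] [ClosedIciTopology U] :
    IsClosed {S : U →L[ℝ] U | IsPositiveOperator S} := by
  simp only [IsPositiveOperator, ofPred_forall]
  exact isClosed_iInter fun u => isClosed_iInter fun _ =>
    isClosed_Ici.preimage (ContinuousLinearMap.apply ℝ U u).continuous

namespace IsPositiveOperator

variable {S T : U →L[ℝ] U}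

section Preorder

variable [Preorder U]

theorem zero : IsPositiveOperator (0 : U →L[ℝ] U) := fun _ _ => le_rfl

theorem one : IsPositiveOperator (1 : U →L[ℝ] U) := fun _ hu => hu

theorem mul (hS : IsPositiveOperator S) (hT : IsPositiveOperator T) :
    IsPositiveOperator (S * T) :=
  fun u hu => hS _ (hT u hu)

theorem pow (hS : IsPositiveOperator S) (n : ℕ) : IsPositiveOperator (S ^ n) := by
  induction n with
  | zero => exact one
  | succ n ih => simpa only [pow_succ] using ih.mul hS

theorem smul [PosSMulMono ℝ U] (hS : IsPositiveOperator S) {c : ℝ} (hc : 0 ≤ c) :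
    IsPositiveOperator (c • S) :=
  fun u hu => smul_nonneg hc (hS u hu)

end Preorder

section OrderedGroup

variable [PartialOrder U] [IsOrderedAddMonoid U]

theorem add (hS : IsPositiveOperator S) (hT : IsPositiveOperator T) :
    IsPositiveOperator (S + T) :=
  fun u hu => add_nonneg (hS u hu) (hT u hu)

theorem monotone (hS : IsPositiveOperator S) : Monotone S := fun u v huv => by
  simpa using hS (v - u) (sub_nonneg.mpr huv)

theorem pow_sub_pow (hS : IsPositiveOperator S) (hTS : IsPositiveOperator (T - S)) (n : ℕ) :
    IsPositiveOperator (T ^ n - S ^ n) := by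
  have hT : IsPositiveOperator T := by simpa using hTS.add hS
  induction n with
  | zero => simpa using zero
  | succ n ih =>
    have h : T ^ (n + 1) - S ^ (n + 1) = T ^ n * (T - S) + (T ^ n - S ^ n) * S := by
      rw [pow_succ, pow_succ]; noncomm_ring
    rw [h]
    exact ((hT.pow n).mul hTS).add (ih.mul hS)

theorem of_hasSum [OrderClosedTopology U] {f : ℕ → U →L[ℝ] U}
    (hf : ∀ n, IsPositiveOperator (f n)) (hS : HasSum f S) : IsPositiveOperator S :=
  fun u hu => (hS.mapL (ContinuousLinearMap.apply ℝ U u)).nonneg fun n => hf n u hu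

theorem ringInverse_one_sub [OrderClosedTopology U] [CompleteSpace U] (hS : IsPositiveOperator S)
    (h : ‖S‖ < 1) : IsPositiveOperator (Ring.inverse (1 - S)) :=
  of_hasSum hS.pow (hasSum_geom_series_inverse S h)

end OrderedGroup

section NormedLattice

variable [Lattice U] [IsOrderedAddMonoid U]

theorem abs_apply_le (hS : IsPositiveOperator S) (u : U) : |S u| ≤ S |u| :=
  abs_le'.mpr ⟨hS.monotone (le_abs_self u), by simpa using hS.monotone (neg_le_abs u)⟩

theorem norm_le_of_sub [HasSolidNorm U] (hS : IsPositiveOperator S)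
    (hTS : IsPositiveOperator (T - S)) : ‖S‖ ≤ ‖T‖ := by
  refine S.opNorm_le_bound (norm_nonneg T) fun u => ?_
  have hSle : S |u| ≤ T |u| := by simpa [sub_nonneg] using hTS |u| (abs_nonneg u)
  have hTnonneg : 0 ≤ T |u| := (hS |u| (abs_nonneg u)).trans hSle
  calc ‖S u‖ ≤ ‖T |u|‖ := norm_le_norm_of_abs_le_abs <| by
        rw [abs_of_nonneg hTnonneg]; exact (hS.abs_apply_le u).trans hSle
    _ ≤ ‖T‖ * ‖|u|‖ := T.le_opNorm _
    _ = ‖T‖ * ‖u‖ := by rw [norm_abs_eq_norm]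

end NormedLattice

end IsPositiveOperator

end PositiveOperator

theorem le_of_forall_pow_le_mul_pow {x y D : ℝ} (hy : 0 ≤ y) (h : ∀ n : ℕ, x ^ n ≤ D * y ^ n) :
    x ≤ y := by
  by_contra! hlt
  have hx : 0 < x := hy.trans_lt hlt
  have hlim : Tendsto (fun n : ℕ => D * (y / x) ^ n) atTop (𝓝 0) := by
    simpa using (tendsto_pow_atTop_nhds_zero_of_lt_one (div_nonneg hy hx.le)
      ((div_lt_one hx).mpr hlt)).const_mul D
  obtain ⟨n, hn⟩ := (hlim.eventually (gt_mem_nhds one_pos)).exists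
  rw [div_pow, ← mul_div_assoc, div_lt_one (pow_pos hx n)] at hn
  exact (h n).not_gt hn

theorem spectralRadius_le_of_norm_pow_le {𝕜 A : Type*} [NormedField 𝕜] [NormedRing A]
    [NormedAlgebra 𝕜 A] [CompleteSpace A] {a : A} {C μ : ℝ} (hμ : 0 ≤ μ)
    (h : ∀ n : ℕ, ‖a ^ n‖ ≤ C * μ ^ n) : spectralRadius 𝕜 a ≤ ENNReal.ofReal μ := by
  refine iSup₂_le fun k hk => ?_
  have hpow (n : ℕ) : ‖k‖ ^ n ≤ C * ‖(1 : A)‖ * μ ^ n := by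
    calc ‖k‖ ^ n = ‖k ^ n‖ := (norm_pow k n).symm
      _ ≤ ‖a ^ n‖ * ‖(1 : A)‖ := spectrum.norm_le_norm_mul_of_mem (spectrum.pow_mem_pow a n hk)
      _ ≤ C * μ ^ n * ‖(1 : A)‖ := by gcongr; exact h n
      _ = C * ‖(1 : A)‖ * μ ^ n := by ring
  change ‖k‖ₑ ≤ _
  rw [← ofReal_norm, ENNReal.ofReal_le_ofReal_iff hμ]
  exact le_of_forall_pow_le_mul_pow hμ hpow

theorem mem_resolventSet_of_spectralRadius_lt_ofReal {A : Type*} [Ring A] [Algebra ℝ A] {a : A}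
    {μ ν : ℝ} (hμ : spectralRadius ℝ a < ENNReal.ofReal μ) (hν : μ ≤ ν) : ν ∈ resolventSet ℝ a := by
  refine spectrum.mem_resolventSet_of_spectralRadius_lt (hμ.trans_le ?_)
  change ENNReal.ofReal μ ≤ ‖ν‖ₑ
  rw [← ofReal_norm]
  exact ENNReal.ofReal_le_ofReal (hν.trans (le_abs_self ν))

theorem spectralRadius_neg {𝕜 A : Type*} [NormedField 𝕜] [Ring A] [Algebra 𝕜 A] (a : A) :
    spectralRadius 𝕜 (-a) = spectralRadius 𝕜 a := by
  have key (b : A) : spectralRadius 𝕜 (-b) ≤ spectralRadius 𝕜 b :=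
    iSup₂_le fun k hk => by
      rw [← spectrum.neg_eq] at hk
      have h := le_iSup₂ (f := fun k (_ : k ∈ spectrum 𝕜 b) => (‖k‖₊ : ENNReal)) (-k) hk
      rwa [nnnorm_neg] at h
  exact le_antisymm (key a) (by simpa using key (-a))

section PositiveResolvent

open spectrum

variable {U : Type*} [NormedAddCommGroup U] [NormedSpace ℝ U] [CompleteSpace U] [PartialOrder U]
  [IsOrderedAddMonoid U] [OrderClosedTopology U] [PosSMulMono ℝ U]
  {T : U →L[ℝ] U}

theorem IsPositiveOperator.resolvent_of_norm_lt (hT : IsPositiveOperator T) {μ : ℝ}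
    (hμ : ‖T‖ < μ) : IsPositiveOperator (resolvent T μ) := by
  have hμ0 : 0 < μ := (norm_nonneg T).trans_lt hμ
  have hsmul : μ • resolvent T μ = Ring.inverse (1 - μ⁻¹ • T) := by
    simpa [resolvent, Units.smul_def] using
      units_smul_resolvent_self (r := Units.mk0 μ hμ0.ne') (a := T)
  have hnorm : ‖μ⁻¹ • T‖ < 1 := by
    rw [norm_smul, norm_inv, Real.norm_of_nonneg hμ0.le, inv_mul_lt_one₀ hμ0]
    exact hμ
  have h := ((hT.smul (inv_nonneg.mpr hμ0.le)).ringInverse_one_sub hnorm).smul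
    (inv_nonneg.mpr hμ0.le)
  rwa [← hsmul, inv_smul_smul₀ hμ0.ne'] at h

-- `R(ν, T) = (1 - (μ - ν) R(μ, T))⁻¹ R(μ, T)`, a Neumann series in nonnegative powers.
theorem IsPositiveOperator.resolvent_of_le {μ ν : ℝ} (hμ : μ ∈ resolventSet ℝ T)
    (hR : IsPositiveOperator (resolvent T μ)) (hνμ : ν ≤ μ)
    (hsmall : (μ - ν) * ‖resolvent T μ‖ < 1) : IsPositiveOperator (resolvent T ν) := by
  have hfac : algebraMap ℝ (U →L[ℝ] U) ν - T =
      (algebraMap ℝ _ μ - T) * (1 - (μ - ν) • resolvent T μ) := by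
    rw [mul_sub, mul_one, mul_smul_comm, resolvent, Ring.mul_inverse_cancel _ hμ,
      Algebra.algebraMap_eq_smul_one, Algebra.algebraMap_eq_smul_one, sub_smul]
    abel
  have hnorm : ‖(μ - ν) • resolvent T μ‖ < 1 := by
    rwa [norm_smul, Real.norm_of_nonneg (sub_nonneg.mpr hνμ)]
  rw [resolvent, hfac, Ring.inverse_mul (Or.inl hμ)]
  exact ((hR.smul (sub_nonneg.mpr hνμ)).ringInverse_one_sub hnorm).mul hR

theorem IsPositiveOperator.resolvent_of_spectralRadius_lt (hT : IsPositiveOperator T) {μ : ℝ}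
    (hμ : spectralRadius ℝ T < ENNReal.ofReal μ) : IsPositiveOperator (resolvent T μ) := by
  have hres (ν : ℝ) (hν : μ ≤ ν) : ν ∈ resolventSet ℝ T :=
    mem_resolventSet_of_spectralRadius_lt_ofReal hμ hν
  -- continuous induction downwards from a point `Λ` beyond `‖T‖`, in the variable `t = Λ - ν`
  set Λ := max μ (‖T‖ + 1)
  set s := {t : ℝ | IsPositiveOperator (resolvent T (Λ - t))}
  suffices Icc 0 (Λ - μ) ⊆ s by
    simpa [s, Λ] using this ⟨sub_nonneg.mpr (le_max_left _ _), le_rfl⟩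
  have hcont : ContinuousOn (fun t => resolvent T (Λ - t)) (Icc 0 (Λ - μ)) := fun t ht =>
    ((hasDerivAt_resolvent_const_left (hres _ (by linarith [ht.2]))).continuousAt.comp
      (continuous_sub_left Λ).continuousAt).continuousWithinAt
  refine IsClosed.Icc_subset_of_forall_mem_nhdsWithin ?_ ?_ ?_
  · rw [inter_comm]
    exact hcont.preimage_isClosed_of_isClosed isClosed_Icc isClosed_setOf_isPositiveOperator
  · simpa [s] using hT.resolvent_of_norm_lt (by linarith [le_max_right μ (‖T‖ + 1)])
  · rintro t ⟨ht, htμ⟩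
    set δ := (‖resolvent T (Λ - t)‖ + 1)⁻¹
    have hδ : 0 < δ := by positivity
    refine mem_of_superset (Ioo_mem_nhdsGT (lt_add_of_pos_right t hδ)) fun t' ht' => ?_
    refine IsPositiveOperator.resolvent_of_le (hres _ (by linarith [htμ.2])) ht
      (by linarith [ht'.1]) ?_
    calc (Λ - t - (Λ - t')) * ‖resolvent T (Λ - t)‖
        ≤ δ * ‖resolvent T (Λ - t)‖ := by gcongr; linarith [ht'.2]
      _ < 1 := by rw [inv_mul_lt_one₀ (by positivity)]; linarith

end PositiveResolvent

section SpectralRadiusMono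

open spectrum

variable {U : Type*} [NormedAddCommGroup U] [NormedSpace ℝ U] [CompleteSpace U] [Lattice U]
  [HasSolidNorm U] [IsOrderedAddMonoid U] {S T : U →L[ℝ] U}

-- `R(μ, T) = μ⁻¹ (1 + T R(μ, T))` iterated gives `μ⁻ⁿ⁻¹ Tⁿ ≤ R(μ, T)`.
theorem IsPositiveOperator.norm_pow_le (hT : IsPositiveOperator T) {μ : ℝ}
    (hμ : spectralRadius ℝ T < ENNReal.ofReal μ) (n : ℕ) :
    ‖T ^ n‖ ≤ ‖resolvent T μ‖ * μ ^ (n + 1) := by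
  set R := resolvent T μ
  have hμ0 : 0 < μ := ENNReal.ofReal_pos.mp (pos_of_gt hμ)
  have hRT : μ • R = 1 + T * R := by
    have h : (algebraMap ℝ (U →L[ℝ] U) μ - T) * R = 1 :=
      Ring.mul_inverse_cancel _ (mem_resolventSet_of_spectralRadius_lt_ofReal hμ le_rfl)
    rw [Algebra.algebraMap_eq_smul_one, sub_mul, smul_one_mul] at h
    rw [← h]; abel
  have hdom (k : ℕ) : IsPositiveOperator (R - (μ⁻¹) ^ (k + 1) • T ^ k) := by
    induction k with
    | zero =>
      have h : R - (μ⁻¹) ^ (0 + 1) • T ^ 0 = μ⁻¹ • (T * R) := by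
        rw [pow_zero, zero_add, pow_one, ← sub_eq_of_eq_add' hRT, smul_sub, inv_smul_smul₀ hμ0.ne']
      rw [h]
      exact (hT.mul (hT.resolvent_of_spectralRadius_lt hμ)).smul (inv_nonneg.mpr hμ0.le)
    | succ k ih =>
      have h : R - (μ⁻¹) ^ (k + 1 + 1) • T ^ (k + 1) =
          μ⁻¹ • (1 + T * (R - (μ⁻¹) ^ (k + 1) • T ^ k)) := by
        rw [mul_sub, mul_smul_comm, ← pow_succ', ← add_sub_assoc, ← hRT, smul_sub,
          inv_smul_smul₀ hμ0.ne', smul_smul, ← pow_succ']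
      rw [h]
      exact (IsPositiveOperator.one.add (hT.mul ih)).smul (inv_nonneg.mpr hμ0.le)
  have h := ((hT.pow n).smul (pow_nonneg (inv_nonneg.mpr hμ0.le) (n + 1))).norm_le_of_sub (hdom n)
  rwa [norm_smul, norm_pow, norm_inv, Real.norm_of_nonneg hμ0.le, inv_pow,
    inv_mul_le_iff₀ (by positivity), mul_comm] at h

theorem IsPositiveOperator.spectralRadius_le (hS : IsPositiveOperator S)
    (hTS : IsPositiveOperator (T - S)) : spectralRadius ℝ S ≤ spectralRadius ℝ T := by
  have hT : IsPositiveOperator T := by simpa using hTS.add hS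
  refine le_of_forall_gt_imp_ge_of_dense fun c hc => ?_
  obtain rfl | hc_top := eq_or_ne c ⊤
  · exact le_top
  rw [← ENNReal.ofReal_toReal hc_top] at hc ⊢
  refine spectralRadius_le_of_norm_pow_le (C := ‖resolvent T c.toReal‖ * c.toReal)
    ENNReal.toReal_nonneg fun n => ?_
  calc ‖S ^ n‖ ≤ ‖T ^ n‖ := (hS.pow n).norm_le_of_sub (hS.pow_sub_pow hTS n)
    _ ≤ ‖resolvent T c.toReal‖ * c.toReal ^ (n + 1) := hT.norm_pow_le hc n
    _ = ‖resolvent T c.toReal‖ * c.toReal * c.toReal ^ n := by ring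

end SpectralRadiusMono

namespace C0Semigroup

variable {E : Type*} [NormedAddCommGroup E] [NormedSpace ℝ E] (T : C0Semigroup E) (l : ℝ) (x : E)

noncomputable def laplace : E := ∫ t in Ioi 0, Real.exp (-(l * t)) • T.toFun t x

theorem continuousOn_laplace_integrand :
    ContinuousOn (fun t => Real.exp (-(l * t)) • T.toFun t x) (Ici 0) :=
  (Real.continuous_exp.comp (continuous_const_mul l).neg).continuousOn.smul (T.strongCont' x)

variable {T l}

theorem integrableOn_laplace_integrand (hT : T.NegGrowthBound) (hl : 0 ≤ l) :
    IntegrableOn (fun t => Real.exp (-(l * t)) • T.toFun t x) (Ioi 0) := by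
  obtain ⟨ε, hε, M, hM⟩ := hT
  refine Integrable.mono' ((exp_neg_integrableOn_Ioi 0 hε).const_mul (M * ‖x‖))
    ((T.continuousOn_laplace_integrand l x).mono Ioi_subset_Ici_self |>.aestronglyMeasurable
      measurableSet_Ioi) ?_
  refine (ae_restrict_iff' measurableSet_Ioi).mpr (Eventually.of_forall fun t (ht : 0 < t) => ?_)
  have hexp : Real.exp (-(l * t)) ≤ 1 := Real.exp_le_one_iff.mpr (by nlinarith)
  calc ‖Real.exp (-(l * t)) • T.toFun t x‖ ≤ 1 * (‖T.toFun t‖ * ‖x‖) := by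
        rw [norm_smul, Real.norm_of_nonneg (Real.exp_nonneg _)]
        gcongr
        exact (T.toFun t).le_opNorm x
    _ ≤ M * ‖x‖ * Real.exp (-ε * t) := by
        rw [one_mul, mul_right_comm]
        gcongr
        exact hM t ht.le

variable [CompleteSpace E]

theorem toFun_laplace (hT : T.NegGrowthBound) (hl : 0 ≤ l) {s : ℝ} (hs : 0 ≤ s) :
    T.toFun s (T.laplace l x) =
      Real.exp (l * s) • ∫ t in Ioi s, Real.exp (-(l * t)) • T.toFun t x := by
  set f := fun t => Real.exp (-(l * t)) • T.toFun t x
  have hshift : ∀ t ∈ Ioi (0 : ℝ), T.toFun s (f t) = Real.exp (l * s) • f (t + s) := by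
    intro t ht
    simp only [f, map_smul, smul_smul, ← Real.exp_add, add_comm t s,
      T.map_add' s t hs (le_of_lt ht), ContinuousLinearMap.comp_apply]
    congr 2; ring
  calc T.toFun s (T.laplace l x) = ∫ t in Ioi 0, T.toFun s (f t) :=
        ((T.toFun s).integral_comp_comm (integrableOn_laplace_integrand x hT hl)).symm
    _ = Real.exp (l * s) • ∫ t in Ioi 0, f (t + s) := by
        rw [setIntegral_congr_fun measurableSet_Ioi hshift, integral_smul]
    _ = Real.exp (l * s) • ∫ t in Ioi s, f t := by
        congr 1
        simpa using (measurePreserving_add_right volume s).setIntegral_preimage_emb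
          (measurableEmbedding_addRight s) f (Ioi s)

-- For `s ≥ 0`, `T s V = g s` with `g s = e^{ls} (V - ∫₀ˢ f)`, whose right derivative at `0`
-- is `l V - f 0` by the fundamental theorem of calculus.
theorem tendsto_laplace (hT : T.NegGrowthBound) (hl : 0 ≤ l) :
    Tendsto (fun t : ℝ => t⁻¹ • (T.toFun t (T.laplace l x) - T.laplace l x)) (𝓝[>] 0)
      (𝓝 (l • T.laplace l x - x)) := by
  set f := fun t => Real.exp (-(l * t)) • T.toFun t x
  set V := T.laplace l x
  have hf := T.continuousOn_laplace_integrand l x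
  have hfi := integrableOn_laplace_integrand x hT hl
  set g := fun s => Real.exp (l * s) • (V - ∫ t in (0 : ℝ)..s, f t)
  have hTg : ∀ s ∈ Ioi (0 : ℝ), T.toFun s V = g s := fun s (hs : 0 < s) => by
    rw [toFun_laplace x hT hl hs.le]
    simp only [g, V, laplace]
    rw [← intervalIntegral.integral_interval_add_Ioi hfi (hfi.mono_set (Ioi_subset_Ioi hs.le)),
      add_sub_cancel_left]
  have hF : HasDerivWithinAt (fun s => ∫ t in (0 : ℝ)..s, f t) (f 0) (Ici 0) 0 :=
    intervalIntegral.integral_hasDerivWithinAt_right (IntervalIntegrable.refl)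
      ((hf.mono Ioi_subset_Ici_self).stronglyMeasurableAtFilter_nhdsWithin measurableSet_Ioi 0)
      ((hf 0 self_mem_Ici).mono Ioi_subset_Ici_self)
  have hexp : HasDerivWithinAt (fun s => Real.exp (l * s)) l (Ici 0) 0 := by
    simpa using ((hasDerivAt_id (0 : ℝ)).const_mul l).exp.hasDerivWithinAt
  have hg : HasDerivWithinAt g
      (Real.exp (l * 0) • -f 0 + l • (V - ∫ t in (0 : ℝ)..0, f t)) (Ici 0) 0 :=
    hexp.smul (hF.const_sub V)
  have hg' : Real.exp (l * 0) • -f 0 + l • (V - ∫ t in (0 : ℝ)..0, f t) = l • V - x := by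
    simp [f, T.map_zero', sub_eq_neg_add]
  rw [hg'] at hg
  refine ((hasDerivWithinAt_iff_tendsto_slope' (lt_irrefl 0)).mp
    (hg.mono Ioi_subset_Ici_self)).congr' ?_
  filter_upwards [self_mem_nhdsWithin] with s hs
  simp [slope_def_module, hTg s hs, g]

end C0Semigroup

theorem C0Semigroup.laplace_nonneg {X : Type*} [NormedAddCommGroup X] [Lattice X] [HasSolidNorm X]
    [IsOrderedAddMonoid X] [NormedSpace ℝ X] {T : C0Semigroup X}
    (hT : ∀ s : ℝ, 0 ≤ s → ∀ x : X, 0 ≤ x → 0 ≤ T.toFun s x) (l : ℝ) {x : X} (hx : 0 ≤ x) :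
    0 ≤ T.laplace l x :=
  integral_nonneg_of_ae <| (ae_restrict_iff' measurableSet_Ioi).mpr <|
    Eventually.of_forall fun t (ht : 0 < t) => smul_nonneg (Real.exp_pos _).le (hT t ht.le x hx)

section Resolvent

variable {E : Type*} [NormedAddCommGroup E] [NormedSpace ℝ E] {A : E →ₗ.[ℝ] E}

theorem IsResolventAt.apply_eq_of_tendsto {T : C0Semigroup E} (hA : T.IsGenerator A) {l : ℝ}
    {R : E →L[ℝ] E} (hR : IsResolventAt A l R) {v x : E}
    (h : Tendsto (fun t : ℝ => t⁻¹ • (T.toFun t v - v)) (𝓝[>] 0) (𝓝 (l • v - x))) : R x = v := by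
  have hv : v ∈ A.domain := (hA.1 v).mpr ⟨_, h⟩
  have hAv : A ⟨v, hv⟩ = l • v - x := tendsto_nhds_unique (hA.2 ⟨v, hv⟩) h
  simpa [hAv] using hR.2 ⟨v, hv⟩

theorem IsResolventAt.sub_apply {μ ν : ℝ} {R R' : E →L[ℝ] E} (hR : IsResolventAt A μ R)
    (hR' : IsResolventAt A ν R') (y : E) : R y - R' y = (ν - μ) • R' (R y) := by
  obtain ⟨hy, hRy⟩ := hR.1 y
  have h : R' (ν • R y - A ⟨R y, hy⟩) = R y := hR'.2 ⟨R y, hy⟩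
  rw [show ν • R y - A ⟨R y, hy⟩ = (ν - μ) • R y + y by linear_combination (norm := module) hRy,
    map_add, map_smul] at h
  linear_combination (norm := module) -h

end Resolvent

section Extrapolation

variable {X Xm1 : Type*} [NormedAddCommGroup X] [NormedSpace ℝ X] [NormedAddCommGroup Xm1]
  [NormedSpace ℝ Xm1] {Tsg : C0Semigroup X} {j : X →L[ℝ] Xm1} {Tm1 : C0Semigroup Xm1}
  {Am1 : Xm1 →ₗ.[ℝ] Xm1} {l : ℝ} {R : Xm1 →L[ℝ] X}

theorem IsResolventAt.apply_eq_laplace [CompleteSpace X] (hω : Tsg.NegGrowthBound)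
    (hj : Function.Injective j)
    (hTm1 : ∀ s : ℝ, 0 ≤ s → ∀ x : X, Tm1.toFun s (j x) = j (Tsg.toFun s x))
    (hAm1 : Tm1.IsGenerator Am1) (hl : 0 ≤ l) (hR : IsResolventAt Am1 l (j.comp R)) (x : X) :
    R (j x) = Tsg.laplace l x := by
  apply hj
  refine hR.apply_eq_of_tendsto hAm1 ?_
  have h := (j.continuous.tendsto _).comp (Tsg.tendsto_laplace x hω hl)
  rw [map_sub, map_smul] at h
  refine h.congr' ?_
  filter_upwards [self_mem_nhdsWithin] with t (ht : 0 < t)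
  simp [hTm1 t ht.le]

theorem IsResolventAt.nonneg_of_mem_closure [Lattice X] [HasSolidNorm X] [IsOrderedAddMonoid X]
    [CompleteSpace X] (hTpos : ∀ s : ℝ, 0 ≤ s → ∀ x : X, 0 ≤ x → 0 ≤ Tsg.toFun s x)
    (hω : Tsg.NegGrowthBound) (hj : Function.Injective j)
    (hTm1 : ∀ s : ℝ, 0 ≤ s → ∀ x : X, Tm1.toFun s (j x) = j (Tsg.toFun s x))
    (hAm1 : Tm1.IsGenerator Am1) (hl : 0 ≤ l) (hR : IsResolventAt Am1 l (j.comp R)) {y : Xm1}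
    (hy : y ∈ closure (j '' {x : X | 0 ≤ x})) : 0 ≤ R y := by
  refine closure_minimal ?_ (isClosed_Ici.preimage R.continuous) hy
  rintro _ ⟨x, hx, rfl⟩
  rw [mem_preimage, hR.apply_eq_laplace hω hj hTm1 hAm1 hl x]
  exact C0Semigroup.laplace_nonneg hTpos l hx

end Extrapolation

theorem resolvent_spectral_radius_lt_one_general
    {X U Xm1 : Type*}
    [NormedAddCommGroup X] [Lattice X] [HasSolidNorm X] [IsOrderedAddMonoid X] [NormedSpace ℝ X] [CompleteSpace X]
    [NormedAddCommGroup U] [Lattice U] [HasSolidNorm U] [IsOrderedAddMonoid U] [NormedSpace ℝ U] [CompleteSpace U]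
    [NormedAddCommGroup Xm1] [NormedSpace ℝ Xm1] [CompleteSpace Xm1]
    (Tsg : C0Semigroup X)
    (hTpos : ∀ s : ℝ, 0 ≤ s → ∀ x : X, 0 ≤ x → 0 ≤ Tsg.toFun s x)
    (hω : Tsg.NegGrowthBound)
    (j : X →L[ℝ] Xm1) (hj : Function.Injective j)
    (Tm1 : C0Semigroup Xm1)
    (hTm1 : ∀ s : ℝ, 0 ≤ s → ∀ x : X, Tm1.toFun s (j x) = j (Tsg.toFun s x))
    (Am1 : Xm1 →ₗ.[ℝ] Xm1) (hAm1 : Tm1.IsGenerator Am1)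
    (B : U →ₗ[ℝ] Xm1)
    (hBpos : ∀ w : U, 0 ≤ w → B w ∈ closure (j '' {x : X | 0 ≤ x}))
    (C : X →L[ℝ] U) (hCpos : ∀ x : X, 0 ≤ x → 0 ≤ C x)
    (Rl : ℝ → Xm1 →L[ℝ] X)
    (hRl : ∀ l : ℝ, 0 ≤ l → IsResolventAt Am1 l (j.comp (Rl l)))
    (Q : ℝ → U →L[ℝ] U) (hQ : ∀ (l : ℝ) (u : U), Q l u = C (Rl l (B u)))
    (hr : spectralRadius ℝ (-(Q 0)) < 1) :
    ∀ l : ℝ, 0 < l →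
      (∀ u : U, 0 ≤ u → 0 ≤ Q l u ∧ Q l u ≤ Q 0 u) ∧
      spectralRadius ℝ (Q l) ≤ spectralRadius ℝ (-(Q 0)) ∧
      (1 : ℝ) ∉ spectrum ℝ (Q l) := by
  intro l hl
  have hRpos (m : ℝ) (hm : 0 ≤ m) {y : Xm1} (hy : y ∈ closure (j '' {x : X | 0 ≤ x})) :
      0 ≤ Rl m y :=
    (hRl m hm).nonneg_of_mem_closure hTpos hω hj hTm1 hAm1 hm hy
  have hresolvent (y : Xm1) : Rl 0 y - Rl l y = l • Rl l (j (Rl 0 y)) :=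
    hj (by simpa using ((hRl 0 le_rfl).sub_apply (hRl l hl.le) y))
  have hQl : IsPositiveOperator (Q l) := fun u hu => by
    rw [hQ]; exact hCpos _ (hRpos l hl.le (hBpos u hu))
  have hQdom : IsPositiveOperator (Q 0 - Q l) := fun u hu => by
    rw [sub_apply, hQ, hQ, ← map_sub, hresolvent]
    exact hCpos _ (smul_nonneg hl.le
      (hRpos l hl.le (subset_closure (mem_image_of_mem j (hRpos 0 le_rfl (hBpos u hu))))))
  have hrad : spectralRadius ℝ (Q l) ≤ spectralRadius ℝ (-(Q 0)) := by
    rw [spectralRadius_neg]; exact hQl.spectralRadius_le hQdom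
  refine ⟨fun u hu => ⟨hQl u hu, sub_nonneg.mp (hQdom u hu)⟩, hrad, fun h1 => h1 ?_⟩
  exact spectrum.mem_resolventSet_of_spectralRadius_lt (by simpa using hrad.trans_lt hr)

/-- Let `A` generate a positive `C₀`-semigroup with negative growth bound on a
Banach lattice `X`, `B : U → X₋₁` and `C : X → U` positive with `U` an
AM-space and `C` bounded.  Write `Q λ = C R(λ,A₋₁) B`, so `C A₋₁⁻¹ B = −Q 0`.
If `r(C A₋₁⁻¹ B) < 1` then for every `λ > 0`:
`0 ≤ C R(λ,A₋₁) B ≤ −C A₋₁⁻¹ B`, hence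
`r(C R(λ,A₋₁) B) ≤ r(C A₋₁⁻¹ B) < 1`; in particular `1 ∈ ρ(C R(λ,A₋₁) B)`. -/
theorem resolvent_spectral_radius_lt_one
    {X U Xm1 : Type*}
    [NormedAddCommGroup X] [Lattice X] [HasSolidNorm X] [IsOrderedAddMonoid X] [NormedSpace ℝ X] [CompleteSpace X]
    [NormedAddCommGroup U] [Lattice U] [HasSolidNorm U] [IsOrderedAddMonoid U] [NormedSpace ℝ U] [CompleteSpace U]
    [NormedAddCommGroup Xm1] [NormedSpace ℝ Xm1] [CompleteSpace Xm1]
    (Tsg : C0Semigroup X)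
    (hTpos : ∀ s : ℝ, 0 ≤ s → ∀ x : X, 0 ≤ x → 0 ≤ Tsg.toFun s x)
    (hω : Tsg.NegGrowthBound)
    (A : X →ₗ.[ℝ] X) (hA : Tsg.IsGenerator A)
    (j : X →L[ℝ] Xm1) (hj : Function.Injective j) (hjd : DenseRange j)
    (Tm1 : C0Semigroup Xm1)
    (hTm1 : ∀ s : ℝ, 0 ≤ s → ∀ x : X, Tm1.toFun s (j x) = j (Tsg.toFun s x))
    (Am1 : Xm1 →ₗ.[ℝ] Xm1) (hAm1 : Tm1.IsGenerator Am1)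
    (hUam : IsAMSpace U)
    (B : U →ₗ[ℝ] Xm1)
    (hBpos : ∀ w : U, 0 ≤ w → B w ∈ closure (j '' {x : X | 0 ≤ x}))
    (C : X →L[ℝ] U) (hCpos : ∀ x : X, 0 ≤ x → 0 ≤ C x)
    (Rl : ℝ → Xm1 →L[ℝ] X)
    (hRl : ∀ l : ℝ, 0 ≤ l → IsResolventAt Am1 l (j.comp (Rl l)))
    (Q : ℝ → U →L[ℝ] U) (hQ : ∀ (l : ℝ) (u : U), Q l u = C (Rl l (B u)))
    (hr : spectralRadius ℝ (-(Q 0)) < 1) :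
    ∀ l : ℝ, 0 < l →
      (∀ u : U, 0 ≤ u → 0 ≤ Q l u ∧ Q l u ≤ Q 0 u) ∧
      spectralRadius ℝ (Q l) ≤ spectralRadius ℝ (-(Q 0)) ∧
      (1 : ℝ) ∉ spectrum ℝ (Q l) :=
  resolvent_spectral_radius_lt_one_general Tsg hTpos hω j hj Tm1 hTm1 Am1 hAm1 B hBpos C hCpos Rl
    hRl Q hQ hr
end

section
/- Let (T̃(t)) be a C₀-semigroup with generator Ã on a Banach space X̃, and let X be a Banach space with X̃₁ ↪ X ↪ X̃ continuously, T̃(t)X ⊆ X for all t, and (T(t)) := (T̃(t)|_X) a C₀-semigroup on X with generator A. Then X̃ embeds continuously into the extrapolation space X_{−1} of A, and for all λ ∈ ρ(A) = ρ(Ã) the extrapolated resolvent satisfies R(λ, A_{−1})|_{X̃} = R(λ, Ã), the extrapolated semigroup satisfies T_{−1}(t)|_{X̃} = T̃(t) for all t ≥ 0, and A_{−1}|_{X̃} = Ã. -/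
open Filter Topology Set MeasureTheory

/-
Since `j ∘ R(λ₀, A₋₁)` inverts `λ₀ - A₋₁` and `j X ⊆ D(A₋₁)`, the operator `R(λ₀, A₋₁) : X₋₁ → X`
is bijective, hence an isomorphism of Banach spaces. The resolvent `R(λ₀, Ã)` takes values in
`D(Ã) ⊆ X`, continuously into `X` by the closed graph theorem, and `k := R(λ₀, A₋₁)⁻¹ ∘ R(λ₀, Ã)`.
The identities all come from one principle: a bounded operator intertwining two semigroups maps
the domain of one generator into that of the other and intertwines the generators, hence also
their resolvents. Applied to `j` and `R(λ₀, A₋₁)` it gives `R(λ₀, A₋₁)|_X = R(λ₀, A)`, applied to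
`e` it gives `R(λ₀, Ã)|_X = R(λ₀, A)`, and, once `k` is seen to intertwine `T̃` and `T₋₁`,
applied to `k` it gives `A₋₁ k = k Ã`.
-/

namespace ContinuousLinearMap

variable {X Y Z : Type*} [NormedAddCommGroup X] [NormedSpace ℝ X] [CompleteSpace X]
  [NormedAddCommGroup Y] [NormedSpace ℝ Y] [NormedAddCommGroup Z] [NormedSpace ℝ Z]
  [CompleteSpace Z]

noncomputable def codRestrictOfInjective (f : Z →L[ℝ] Y) (e : X →L[ℝ] Y)
    (he : Function.Injective e) (hf : ∀ z, f z ∈ LinearMap.range (e : X →ₗ[ℝ] Y)) : Z →L[ℝ] X :=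
  ofIsClosedGraph (g := (f : Z →ₗ[ℝ] Y).codRestrictOfInjective e he hf) <| by
    convert isClosed_eq (f.continuous.comp continuous_fst) (e.continuous.comp continuous_snd)
    ext ⟨z, x⟩
    simp only [SetLike.mem_coe, LinearMap.mem_graph_iff, Set.mem_ofPred_eq, Function.comp_apply,
      ← he.eq_iff, ← ContinuousLinearMap.coe_coe e, LinearMap.codRestrictOfInjective_comp_apply]
    exact eq_comm

@[simp]
theorem codRestrictOfInjective_comp_apply (f : Z →L[ℝ] Y) (e : X →L[ℝ] Y)
    (he : Function.Injective e) (hf : ∀ z, f z ∈ LinearMap.range (e : X →ₗ[ℝ] Y)) (z : Z) :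
    e (codRestrictOfInjective f e he hf z) = f z :=
  LinearMap.codRestrictOfInjective_comp_apply _ _ he hf z

end ContinuousLinearMap

namespace C0Semigroup

variable {X Y : Type*} [NormedAddCommGroup X] [NormedSpace ℝ X]
  [NormedAddCommGroup Y] [NormedSpace ℝ Y]

theorem toFun_comm (T : C0Semigroup X) {s t : ℝ} (hs : 0 ≤ s) (ht : 0 ≤ t) (x : X) :
    T.toFun s (T.toFun t x) = T.toFun t (T.toFun s x) := by
  rw [← ContinuousLinearMap.comp_apply, ← T.map_add' s t hs ht, add_comm,
    T.map_add' t s ht hs, ContinuousLinearMap.comp_apply]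

theorem IsGenerator.exists_apply_eq_of_tendsto {T : C0Semigroup X} {A : X →ₗ.[ℝ] X}
    (hA : T.IsGenerator A) {x y : X}
    (h : Tendsto (fun t : ℝ => t⁻¹ • (T.toFun t x - x)) (𝓝[>] 0) (𝓝 y)) :
    ∃ hx : x ∈ A.domain, A ⟨x, hx⟩ = y :=
  have hx : x ∈ A.domain := (hA.1 x).2 ⟨y, h⟩
  ⟨hx, tendsto_nhds_unique (hA.2 ⟨x, hx⟩) h⟩

theorem IsGenerator.exists_apply_eq_of_intertwine {T : C0Semigroup X} {S : C0Semigroup Y}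
    {A : X →ₗ.[ℝ] X} {B : Y →ₗ.[ℝ] Y} (hA : T.IsGenerator A) (hB : S.IsGenerator B)
    (f : X →L[ℝ] Y) (hf : ∀ t, 0 ≤ t → ∀ x, S.toFun t (f x) = f (T.toFun t x))
    (x : A.domain) : ∃ h : f x ∈ B.domain, B ⟨f x, h⟩ = f (A x) := by
  refine hB.exists_apply_eq_of_tendsto (((f.continuous.tendsto _).comp (hA.2 x)).congr' ?_)
  filter_upwards [self_mem_nhdsWithin] with t ht
  simp only [Function.comp_apply, map_smul, map_sub, hf t (le_of_lt ht)]

theorem IsGenerator.toFun_apply_mem_domain {T : C0Semigroup X} {A : X →ₗ.[ℝ] X}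
    (hA : T.IsGenerator A) {t : ℝ} (ht : 0 ≤ t) (x : A.domain) :
    ∃ h : T.toFun t x ∈ A.domain, A ⟨T.toFun t x, h⟩ = T.toFun t (A x) :=
  hA.exists_apply_eq_of_intertwine hA (T.toFun t) (fun _ hs _ => T.toFun_comm hs ht _) x

end C0Semigroup

namespace IsResolventAt

variable {X Y : Type*} [NormedAddCommGroup X] [NormedSpace ℝ X]
  [NormedAddCommGroup Y] [NormedSpace ℝ Y] {A : X →ₗ.[ℝ] X} {l : ℝ} {R : X →L[ℝ] X}

theorem injective (hR : IsResolventAt A l R) : Function.Injective R := by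
  intro x y hxy
  obtain ⟨hx, hx'⟩ := hR.1 x
  obtain ⟨hy, hy'⟩ := hR.1 y
  calc x = l • R x - A ⟨R x, hx⟩ := hx'.symm
    _ = l • R y - A ⟨R y, hy⟩ := by simp only [hxy]
    _ = y := hy'

theorem apply_apply (hR : IsResolventAt A l R) (u : A.domain) : R (A u) = l • R u - u := by
  have h := hR.2 u
  rw [map_sub, map_smul] at h
  rw [eq_sub_iff_add_eq, add_comm]
  exact (sub_eq_iff_eq_add.mp h).symm

theorem map_apply_of_intertwine {B : Y →ₗ.[ℝ] Y} {R' : Y →L[ℝ] Y}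
    (hR : IsResolventAt A l R) (hR' : IsResolventAt B l R') (f : X →L[ℝ] Y)
    (hf : ∀ x : A.domain, ∃ h : f x ∈ B.domain, B ⟨f x, h⟩ = f (A x)) (x : X) :
    f (R x) = R' (f x) := by
  obtain ⟨hRx, hx⟩ := hR.1 x
  obtain ⟨hfRx, hB⟩ := hf ⟨R x, hRx⟩
  have h := hR'.2 ⟨f (R x), hfRx⟩
  rw [hB, ← map_smul, ← map_sub, hx] at h
  exact h.symm

theorem toFun_apply_comm {T : C0Semigroup X} (hA : T.IsGenerator A) (hR : IsResolventAt A l R)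
    {t : ℝ} (ht : 0 ≤ t) (x : X) : T.toFun t (R x) = R (T.toFun t x) :=
  hR.map_apply_of_intertwine hR (T.toFun t) (hA.toFun_apply_mem_domain ht) x

end IsResolventAt

section Extrapolation

variable {X Y : Type*} [NormedAddCommGroup X] [NormedSpace ℝ X]
  [NormedAddCommGroup Y] [NormedSpace ℝ Y] {T : C0Semigroup X} {S : C0Semigroup Y}
  {A : X →ₗ.[ℝ] X} {B : Y →ₗ.[ℝ] Y} {l : ℝ} {j : X →L[ℝ] Y} {R : Y →L[ℝ] X}

theorem IsResolventAt.toFun_apply_comm_of_comp (hB : S.IsGenerator B)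
    (hj : Function.Injective j) (hjT : ∀ t, 0 ≤ t → ∀ x, S.toFun t (j x) = j (T.toFun t x))
    (hR : IsResolventAt B l (j.comp R)) (t : ℝ) (ht : 0 ≤ t) (y : Y) :
    T.toFun t (R y) = R (S.toFun t y) :=
  hj <| by rw [← hjT t ht]; exact hR.toFun_apply_comm hB ht y

theorem IsResolventAt.of_comp (hA : T.IsGenerator A) (hB : S.IsGenerator B)
    (hj : Function.Injective j) (hjT : ∀ t, 0 ≤ t → ∀ x, S.toFun t (j x) = j (T.toFun t x))
    (hdom : ∀ x, j x ∈ B.domain) (hR : IsResolventAt B l (j.comp R)) :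
    IsResolventAt A l (R.comp j) := by
  refine ⟨fun x => ?_, fun u => ?_⟩
  · obtain ⟨hRx, hARx⟩ := hB.exists_apply_eq_of_intertwine hA R
      (hR.toFun_apply_comm_of_comp hB hj hjT) ⟨j x, hdom x⟩
    have hRB : R (B ⟨j x, hdom x⟩) = l • R (j x) - x :=
      hj (by simpa using hR.apply_apply ⟨j x, hdom x⟩)
    exact ⟨hRx, by simp [hARx, hRB]⟩
  · obtain ⟨hju, hBju⟩ := hA.exists_apply_eq_of_intertwine hB j hjT u
    apply hj
    simpa [hBju] using hR.2 ⟨j u, hju⟩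

theorem IsResolventAt.bijective_of_comp (hj : Function.Injective j) (hdom : ∀ x, j x ∈ B.domain)
    (hR : IsResolventAt B l (j.comp R)) : Function.Bijective R :=
  ⟨Function.Injective.of_comp (f := j) hR.injective, fun x => ⟨_, hj (hR.2 ⟨j x, hdom x⟩)⟩⟩

end Extrapolation

theorem subspace_semigroup_extrapolation_general
    {Xt X Xm1 : Type*}
    [NormedAddCommGroup Xt] [NormedSpace ℝ Xt] [CompleteSpace Xt]
    [NormedAddCommGroup X] [NormedSpace ℝ X] [CompleteSpace X]
    [NormedAddCommGroup Xm1] [NormedSpace ℝ Xm1] [CompleteSpace Xm1]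
    (Ttsg : C0Semigroup Xt) (At : Xt →ₗ.[ℝ] Xt) (hAt : Ttsg.IsGenerator At)
    -- `X ↪ X̃` continuously
    (e : X →L[ℝ] Xt) (he : Function.Injective e)
    -- `X̃₁ = (D(Ã), ‖·‖_Ã) ↪ X` continuously
    (i : At.domain →ₗ[ℝ] X) (hei : ∀ x : At.domain, e (i x) = (x : Xt))
    -- the restricted semigroup on `X` and its generator
    (Tsg : C0Semigroup X)
    (hrest : ∀ t : ℝ, 0 ≤ t → ∀ x : X, e (Tsg.toFun t x) = Ttsg.toFun t (e x))
    (A : X →ₗ.[ℝ] X) (hA : Tsg.IsGenerator A)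
    -- extrapolation data of `A`: `X₋₁`, extended semigroup and generator
    (j : X →L[ℝ] Xm1) (hj : Function.Injective j)
    (Tm1 : C0Semigroup Xm1)
    (hTm1 : ∀ s : ℝ, 0 ≤ s → ∀ x : X, Tm1.toFun s (j x) = j (Tsg.toFun s x))
    (Am1 : Xm1 →ₗ.[ℝ] Xm1) (hAm1 : Tm1.IsGenerator Am1)
    (hXdom : ∀ x : X, j x ∈ Am1.domain)
    -- a point `λ0 ∈ ρ(A) = ρ(Ã)` with the resolvents of `Ã` and of `A₋₁`
    (l0 : ℝ) (Rt : Xt →L[ℝ] Xt) (hRt : IsResolventAt At l0 Rt)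
    (Rm1 : Xm1 →L[ℝ] X) (hRm1 : IsResolventAt Am1 l0 (j.comp Rm1)) :
    ∃ k : Xt →L[ℝ] Xm1, Function.Injective k ∧
      (∀ x : X, k (e x) = j x) ∧
      (∀ y : Xt, e (Rm1 (k y)) = Rt y) ∧
      (∀ t : ℝ, 0 ≤ t → ∀ y : Xt, Tm1.toFun t (k y) = k (Ttsg.toFun t y)) ∧
      (∀ x : At.domain, ∀ h : k (x : Xt) ∈ Am1.domain,
        Am1 ⟨k (x : Xt), h⟩ = k (At x)) := by
  have hRA : IsResolventAt A l0 (Rm1.comp j) := hRm1.of_comp hA hAm1 hj hTm1 hXdom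
  have hRe : ∀ x, e (Rm1 (j x)) = Rt (e x) := hRA.map_apply_of_intertwine hRt e
    (hA.exists_apply_eq_of_intertwine hAt e fun t ht x => (hrest t ht x).symm)
  let g : Xt →L[ℝ] X := Rt.codRestrictOfInjective e he fun y =>
    ⟨i ⟨Rt y, (hRt.1 y).1⟩, hei _⟩
  have heg : ∀ y, e (g y) = Rt y := Rt.codRestrictOfInjective_comp_apply e he _
  have hg_sg : ∀ t, 0 ≤ t → ∀ y, Tsg.toFun t (g y) = g (Ttsg.toFun t y) := fun t ht y =>
    he (by rw [hrest t ht, heg, heg, hRt.toFun_apply_comm hAt ht])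
  have hRm1_bij := hRm1.bijective_of_comp hj hXdom
  let S : Xm1 ≃L[ℝ] X := .ofBijective Rm1 (LinearMap.ker_eq_bot.mpr hRm1_bij.1)
    (LinearMap.range_eq_top.mpr hRm1_bij.2)
  have hS_sg : ∀ t, 0 ≤ t → ∀ x, Tm1.toFun t (S.symm x) = S.symm (Tsg.toFun t x) :=
    fun t ht x => S.injective (by
      simp [S, ← hRm1.toFun_apply_comm_of_comp hAm1 hj hTm1 t ht])
  let k : Xt →L[ℝ] Xm1 := (S.symm : X →L[ℝ] Xm1).comp g
  have hk_sg : ∀ t, 0 ≤ t → ∀ y, Tm1.toFun t (k y) = k (Ttsg.toFun t y) := fun t ht y => by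
    simp [k, hS_sg t ht, hg_sg t ht]
  refine ⟨k, S.symm.injective.comp ?_, fun x => ?_, fun y => ?_, hk_sg, fun x _ => ?_⟩
  · exact fun a b hab => hRt.injective (by rw [← heg, ← heg]; exact congrArg e hab)
  · exact S.symm_apply_eq.mpr (he (by simp [S, heg, hRe]))
  · simp [k, S, heg]
  · exact (hAt.exists_apply_eq_of_intertwine hAm1 k hk_sg x).2

/-- (Subspace semigroups and extrapolation) Let `(T̃(t))` be a `C₀`-semigroup
with generator `Ã` on `X̃`, and `X` a Banach space with `X̃₁ ↪ X ↪ X̃`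
continuously, `T̃(t) X ⊆ X`, and `(T(t)) = (T̃(t)|_X)` a `C₀`-semigroup on `X`
with generator `A`.  Then `X̃` embeds continuously into the extrapolation
space `X₋₁` of `A` via some `k` with `k|_X = j`, and the extrapolated
resolvent, semigroup and generator restrict on `X̃` to `R(λ,Ã)`, `T̃(t)`
and `Ã` respectively. -/
theorem subspace_semigroup_extrapolation
    {Xt X Xm1 : Type*}
    [NormedAddCommGroup Xt] [NormedSpace ℝ Xt] [CompleteSpace Xt]
    [NormedAddCommGroup X] [NormedSpace ℝ X] [CompleteSpace X]
    [NormedAddCommGroup Xm1] [NormedSpace ℝ Xm1] [CompleteSpace Xm1]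
    (Ttsg : C0Semigroup Xt) (At : Xt →ₗ.[ℝ] Xt) (hAt : Ttsg.IsGenerator At)
    -- `X ↪ X̃` continuously
    (e : X →L[ℝ] Xt) (he : Function.Injective e)
    -- `X̃₁ = (D(Ã), ‖·‖_Ã) ↪ X` continuously
    (i : At.domain →ₗ[ℝ] X) (hei : ∀ x : At.domain, e (i x) = (x : Xt))
    (hicont : ∃ c : ℝ, ∀ x : At.domain, ‖i x‖ ≤ c * (‖(x : Xt)‖ + ‖At x‖))
    -- the restricted semigroup on `X` and its generator
    (Tsg : C0Semigroup X)
    (hrest : ∀ t : ℝ, 0 ≤ t → ∀ x : X, e (Tsg.toFun t x) = Ttsg.toFun t (e x))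
    (A : X →ₗ.[ℝ] X) (hA : Tsg.IsGenerator A)
    -- extrapolation data of `A`: `X₋₁`, extended semigroup and generator
    (j : X →L[ℝ] Xm1) (hj : Function.Injective j) (hjd : DenseRange j)
    (Tm1 : C0Semigroup Xm1)
    (hTm1 : ∀ s : ℝ, 0 ≤ s → ∀ x : X, Tm1.toFun s (j x) = j (Tsg.toFun s x))
    (Am1 : Xm1 →ₗ.[ℝ] Xm1) (hAm1 : Tm1.IsGenerator Am1)
    (hXdom : ∀ x : X, j x ∈ Am1.domain)
    -- a point `λ0 ∈ ρ(A) = ρ(Ã)` with the resolvents of `Ã` and of `A₋₁`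
    (l0 : ℝ) (Rt : Xt →L[ℝ] Xt) (hRt : IsResolventAt At l0 Rt)
    (Rm1 : Xm1 →L[ℝ] X) (hRm1 : IsResolventAt Am1 l0 (j.comp Rm1)) :
    ∃ k : Xt →L[ℝ] Xm1, Function.Injective k ∧
      (∀ x : X, k (e x) = j x) ∧
      (∀ y : Xt, e (Rm1 (k y)) = Rt y) ∧
      (∀ t : ℝ, 0 ≤ t → ∀ y : Xt, Tm1.toFun t (k y) = k (Ttsg.toFun t y)) ∧
      (∀ x : At.domain, ∀ h : k (x : Xt) ∈ Am1.domain,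
        Am1 ⟨k (x : Xt), h⟩ = k (At x)) :=
  subspace_semigroup_extrapolation_general Ttsg At hAt e he i hei Tsg hrest A hA j hj Tm1 hTm1 Am1
    hAm1 hXdom l0 Rt hRt Rm1 hRm1
end
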